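/- If g·f_j belongs to F[V](q−1) for all g ∈ G and all 1 ≤ j ≤ k, then f_1, ..., f_k are G-invariant polynomials; hence they form a separating set for F_q[V]^G. -/

import Mathlib

/-!
Each `f_j` is the indicator function of the orbit `W_j`, and `W_j` is `G`-stable, so `g · f_j`
and `f_j` take the same values at every point of `F_q^n`. Both have degree at most `q - 1` in
each variable, and such reduced polynomials are determined by their values on `F_q^n`; hence
`g · f_j = f_j`. Separation is immediate: `f_j` is `1` on `W_j` and `0` off it.
-/

open MvPolynomial

/-- The substitution action of a matrix `M` on polynomials, so that
`(polyAct M f)(v) = f (M.mulVec v)`.  Taking `M = g⁻¹` gives the action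
`(g · f)(v) = f (g⁻¹ · v)` of a matrix group on the coordinate ring. -/
noncomputable def polyAct {F : Type*} [CommSemiring F] {n : ℕ}
    (M : Matrix (Fin n) (Fin n) F) (f : MvPolynomial (Fin n) F) : MvPolynomial (Fin n) F :=
  aeval (fun i => ∑ j, C (M i j) * X j) f

/-- `f_w = (-1)^n ∏_i ∏_{a ∈ F \ {w_i}} (x_i - a)`, the indicator polynomial of `w`. -/
noncomputable def fW {F : Type*} [Field F] [Fintype F] [DecidableEq F] {n : ℕ}
    (w : Fin n → F) : MvPolynomial (Fin n) F :=
  (-1) ^ n * ∏ i, ∏ a ∈ (Finset.univ \ {w i}), (X i - C a)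

/-- `f_j = ∑_{w ∈ W_j} f_w`, the indicator polynomial of the subset `W ⊆ V`. -/
noncomputable def fOrb {F : Type*} [Field F] [Fintype F] [DecidableEq F] {n : ℕ}
    (W : Set (Fin n → F)) : MvPolynomial (Fin n) F :=
  ∑ w ∈ (Set.toFinite W).toFinset, fW w

/-- `n_j = ∏_{g ∈ G} (g · f)`, where `(g · f)(v) = f(g⁻¹ · v)`. -/
noncomputable def nInvPoly {F : Type*} [Field F] [Fintype F] {n : ℕ}
    (G : Subgroup (Matrix.GeneralLinearGroup (Fin n) F)) (f : MvPolynomial (Fin n) F) :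
    MvPolynomial (Fin n) F :=
  letI : Fintype G := Fintype.ofFinite G
  ∏ g : G, polyAct (((g : Matrix.GeneralLinearGroup (Fin n) F)⁻¹ :
      Matrix.GeneralLinearGroup (Fin n) F) : Matrix (Fin n) (Fin n) F) f

/-- The Reynolds average `h = (1/|G|) ∑_{g ∈ G} (g · f)`. -/
noncomputable def reynolds {F : Type*} [Field F] [Fintype F] {n : ℕ}
    (G : Subgroup (Matrix.GeneralLinearGroup (Fin n) F)) (f : MvPolynomial (Fin n) F) :
    MvPolynomial (Fin n) F :=
  letI : Fintype G := Fintype.ofFinite G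
  C ((Nat.card G : F)⁻¹) * ∑ g : G, polyAct (((g : Matrix.GeneralLinearGroup (Fin n) F)⁻¹ :
      Matrix.GeneralLinearGroup (Fin n) F) : Matrix (Fin n) (Fin n) F) f

/-- A monomial matrix: exactly one nonzero entry in each row and in each column. -/
def IsMonomialMatrix {F : Type*} [Zero F] {n : ℕ} (M : Matrix (Fin n) (Fin n) F) : Prop :=
  (∀ i, ∃! j, M i j ≠ 0) ∧ (∀ j, ∃! i, M i j ≠ 0)

universe u

theorem prod_univ_sdiff_singleton_sub {F : Type*} [Field F] [Fintype F] [DecidableEq F] (c : F) :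
    ∏ a ∈ Finset.univ \ {c}, (c - a) = -1 := by
  have hsub : ∏ a ∈ Finset.univ \ {c}, (c - a) = ∏ x : Fˣ, (x : F) := by
    refine Finset.prod_bij'
      (fun a ha => Units.mk0 (c - a) (sub_ne_zero.2 fun h => by simp [h] at ha))
      (fun x _ => c - (x : F)) (by simp) (by simp [sub_eq_self, Units.ne_zero]) (by simp)
      (fun x _ => by ext; simp) (fun _ _ => rfl)
  rw [hsub, ← Units.coe_prod, FiniteField.prod_univ_units_id_eq_neg_one, Units.val_neg,
    Units.val_one]

theorem prod_univ_sdiff_singleton_sub_apply {F : Type*} [Field F] [Fintype F] [DecidableEq F]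
    (c x : F) : ∏ a ∈ Finset.univ \ {c}, (x - a) = if x = c then -1 else 0 := by
  split_ifs with h
  · rw [h, prod_univ_sdiff_singleton_sub]
  · exact Finset.prod_eq_zero (by simpa using h) (sub_self x)

theorem eval_fW {F : Type*} [Field F] [Fintype F] [DecidableEq F] {n : ℕ} (v w : Fin n → F) :
    eval v (fW w) = if v = w then 1 else 0 := by
  simp only [fW, map_mul, map_pow, map_neg, map_one, map_prod, map_sub, eval_X, eval_C,
    prod_univ_sdiff_singleton_sub_apply, Fintype.prod_ite_zero, funext_iff]
  split_ifs <;> simp [← mul_pow]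

theorem eval_fOrb {F : Type*} [Field F] [Fintype F] [DecidableEq F] {n : ℕ}
    (W : Set (Fin n → F)) (v : Fin n → F) : eval v (fOrb W) = W.indicator 1 v := by
  classical
  simp only [fOrb, map_sum, eval_fW, Finset.sum_ite_eq, Set.Finite.mem_toFinset,
    Set.indicator_apply, Pi.one_apply]

theorem eval_polyAct {R : Type*} [CommSemiring R] {n : ℕ}
    (M : Matrix (Fin n) (Fin n) R) (f : MvPolynomial (Fin n) R) (v : Fin n → R) :
    eval v (polyAct M f) = eval (M.mulVec v) f := by
  rw [polyAct, aeval_def, algebraMap_eq, ← eval_assoc]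
  congr 2
  funext i
  simp [Matrix.mulVec, dotProduct]

theorem degreeOf_X_sub_C_le {R : Type*} [CommRing R] [Nontrivial R] {σ : Type*} [DecidableEq σ]
    (i j : σ) (a : R) : degreeOf i (X j - C a) ≤ if i = j then 1 else 0 :=
  (degreeOf_sub_le _ _ _).trans (by rw [degreeOf_X, degreeOf_C, Nat.max_zero])

theorem degreeOf_prod_X_sub_C_le {R : Type*} [CommRing R] [Nontrivial R] {σ : Type*}
    [DecidableEq σ] (i j : σ) (s : Finset R) :
    degreeOf i (∏ a ∈ s, (X j - C a)) ≤ if i = j then s.card else 0 := by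
  refine (degreeOf_prod_le _ _ _).trans
    ((Finset.sum_le_sum fun a _ => degreeOf_X_sub_C_le i j a).trans ?_)
  split_ifs <;> simp

theorem degreeOf_fW_le {F : Type*} [Field F] [Fintype F] [DecidableEq F] {n : ℕ}
    (w : Fin n → F) (i : Fin n) : degreeOf i (fW w) ≤ Fintype.card F - 1 := by
  have hsign : degreeOf i ((-1 : MvPolynomial (Fin n) F) ^ n) = 0 := by
    rw [show (-1 : MvPolynomial (Fin n) F) ^ n = C ((-1) ^ n) by simp, degreeOf_C]
  calc degreeOf i (fW w)
      ≤ degreeOf i ((-1 : MvPolynomial (Fin n) F) ^ n) +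
          degreeOf i (∏ j, ∏ a ∈ Finset.univ \ {w j}, (X j - C a)) := degreeOf_mul_le _ _ _
    _ ≤ ∑ j, degreeOf i (∏ a ∈ Finset.univ \ {w j}, (X j - C a)) := by
        rw [hsign, zero_add]
        exact degreeOf_prod_le _ _ _
    _ ≤ ∑ j, if i = j then (Finset.univ \ {w j}).card else 0 :=
        Finset.sum_le_sum fun j _ => degreeOf_prod_X_sub_C_le i j _
    _ = Fintype.card F - 1 := by
        rw [Finset.sum_ite_eq, if_pos (Finset.mem_univ _), Finset.card_univ_sdiff,
          Finset.card_singleton]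

theorem degreeOf_fOrb_le {F : Type*} [Field F] [Fintype F] [DecidableEq F] {n : ℕ}
    (W : Set (Fin n → F)) (i : Fin n) : degreeOf i (fOrb W) ≤ Fintype.card F - 1 :=
  (degreeOf_sum_le _ _ _).trans (Finset.sup_le fun w _ => degreeOf_fW_le w i)

theorem MvPolynomial.eq_of_eval_eq_of_degreeOf_le {σ : Type} [Finite σ] {K : Type u} [Field K]
    [Fintype K] {p q : MvPolynomial σ K}
    (hp : ∀ i, degreeOf i p ≤ Fintype.card K - 1) (hq : ∀ i, degreeOf i q ≤ Fintype.card K - 1)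
    (h : ∀ v, eval v p = eval v q) : p = q := by
  classical
  -- `eq_zero_of_eval_eq_zero` needs the variables and the field in the same universe
  let e : ULift.{u} σ ≃ σ := Equiv.ulift
  refine sub_eq_zero.1 (rename_injective _ e.symm.injective ?_)
  rw [map_zero]
  refine eq_zero_of_eval_eq_zero _ _ _ (fun v => by simp [eval_rename, h]) ?_
  rw [mem_restrictDegree_iff_sup]
  intro j
  rw [← degreeOf_def]
  exact (degreeOf_rename_of_injective e.symm.injective (e j)).trans_le <|
    (degreeOf_sub_le _ _ _).trans (max_le (hp _) (hq _))

theorem polyAct_fOrb_eq_self {F : Type*} [Field F] [Fintype F] [DecidableEq F] {n : ℕ}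
    {M : Matrix (Fin n) (Fin n) F} {W : Set (Fin n → F)} (hW : ∀ v, M.mulVec v ∈ W ↔ v ∈ W)
    (hdeg : ∀ i, degreeOf i (polyAct M (fOrb W)) ≤ Fintype.card F - 1) :
    polyAct M (fOrb W) = fOrb W :=
  eq_of_eval_eq_of_degreeOf_le hdeg (degreeOf_fOrb_le W) fun v => by
    classical
    simp only [eval_polyAct, eval_fOrb, Set.indicator_apply, hW, Pi.one_apply]

section Orbit

variable {m R : Type*} [Fintype m] [DecidableEq m] [CommRing R]

def glOrbit (G : Subgroup (GL m R)) (w : m → R) : Set (m → R) :=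
  {u | ∃ g ∈ G, (g : Matrix m m R).mulVec w = u}

theorem mulVec_mem_glOrbit_iff {G : Subgroup (GL m R)} {g : GL m R} (hg : g ∈ G) (w v : m → R) :
    (g : Matrix m m R).mulVec v ∈ glOrbit G w ↔ v ∈ glOrbit G w := by
  constructor
  · rintro ⟨h, hh, hhv⟩
    refine ⟨g⁻¹ * h, mul_mem (inv_mem hg) hh, ?_⟩
    rw [Units.val_mul, ← Matrix.mulVec_mulVec, hhv, Matrix.mulVec_mulVec, Units.inv_mul,
      Matrix.one_mulVec]
  · rintro ⟨h, hh, rfl⟩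
    exact ⟨g * h, mul_mem hg hh, by rw [Units.val_mul, Matrix.mulVec_mulVec]⟩

theorem exists_mulVec_eq_of_mem_glOrbit {G : Subgroup (GL m R)} {w u v : m → R}
    (hu : u ∈ glOrbit G w) (hv : v ∈ glOrbit G w) : ∃ g ∈ G, (g : Matrix m m R).mulVec u = v := by
  obtain ⟨g, hg, rfl⟩ := hu
  obtain ⟨h, hh, rfl⟩ := hv
  refine ⟨h * g⁻¹, mul_mem hh (inv_mem hg), ?_⟩
  rw [Matrix.mulVec_mulVec, ← Units.val_mul, inv_mul_cancel_right]

end Orbit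

theorem stmt3_general {q n k : ℕ} (F : Type*) [Field F] [Fintype F] [DecidableEq F]
    (hq : Fintype.card F = q)
    (G : Subgroup (Matrix.GeneralLinearGroup (Fin n) F))
    (W : Fin k → Set (Fin n → F))
    (horb : ∀ j, ∃ w : Fin n → F, W j =
      {u | ∃ g ∈ G, (g : Matrix (Fin n) (Fin n) F).mulVec w = u})
    (hcover : ∀ v : Fin n → F, ∃ j, v ∈ W j)
    (hdeg : ∀ g ∈ G, ∀ j, ∀ i : Fin n,
      degreeOf i
        (polyAct ((g⁻¹ : Matrix.GeneralLinearGroup (Fin n) F) : Matrix (Fin n) (Fin n) F)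
          (fOrb (W j))) ≤ q - 1) :
    -- the f_j are invariants
    (∀ j, ∀ g ∈ G,
      polyAct ((g⁻¹ : Matrix.GeneralLinearGroup (Fin n) F) : Matrix (Fin n) (Fin n) F)
        (fOrb (W j)) = fOrb (W j)) ∧
    -- hence they form a separating set
    (∀ u v : Fin n → F,
      (¬ ∃ g ∈ G, (g : Matrix (Fin n) (Fin n) F).mulVec u = v) →
      ∃ j, eval u (fOrb (W j)) ≠ eval v (fOrb (W j))) := by
  refine ⟨fun j g hg => ?_, fun u v hne => ?_⟩
  · obtain ⟨w, hw⟩ := horb j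
    refine polyAct_fOrb_eq_self (fun v => ?_) (hq ▸ hdeg g hg j)
    rw [hw]
    exact mulVec_mem_glOrbit_iff (inv_mem hg) w v
  · obtain ⟨j, hu⟩ := hcover u
    obtain ⟨w, hw⟩ := horb j
    have hv : v ∉ W j := fun hv => hne <| by
      rw [hw] at hu hv
      exact exists_mulVec_eq_of_mem_glOrbit hu hv
    exact ⟨j, by simp [eval_fOrb, hu, hv]⟩

/-- if `g·f_j ∈ F[V](q-1)` (i.e. every variable-degree of `g·f_j` is at most
`q-1`) for all `g ∈ G` and all `j`, then the `f_j` are invariants, hence form a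
separating set for `F_q[V]^G`. -/
theorem stmt3 {q n k : ℕ} (F : Type*) [Field F] [Fintype F] [DecidableEq F]
    (hq : Fintype.card F = q)
    (G : Subgroup (Matrix.GeneralLinearGroup (Fin n) F))
    (W : Fin k → Set (Fin n → F))
    (horb : ∀ j, ∃ w : Fin n → F, W j =
      {u | ∃ g ∈ G, (g : Matrix (Fin n) (Fin n) F).mulVec w = u})
    (hcover : ∀ v : Fin n → F, ∃ j, v ∈ W j)
    (hdisj : ∀ j₁ j₂, j₁ ≠ j₂ → Disjoint (W j₁) (W j₂))
    (hdeg : ∀ g ∈ G, ∀ j, ∀ i : Fin n,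
      degreeOf i
        (polyAct ((g⁻¹ : Matrix.GeneralLinearGroup (Fin n) F) : Matrix (Fin n) (Fin n) F)
          (fOrb (W j))) ≤ q - 1) :
    -- the f_j are invariants
    (∀ j, ∀ g ∈ G,
      polyAct ((g⁻¹ : Matrix.GeneralLinearGroup (Fin n) F) : Matrix (Fin n) (Fin n) F)
        (fOrb (W j)) = fOrb (W j)) ∧
    -- hence they form a separating set
    (∀ u v : Fin n → F,
      (¬ ∃ g ∈ G, (g : Matrix (Fin n) (Fin n) F).mulVec u = v) →
      ∃ j, eval u (fOrb (W j)) ≠ eval v (fOrb (W j))) :=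
  stmt3_general F hq G W horb hcover hdeg
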